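/- For every k ≥ 2 and every index i, the function h ↦ LN_k(h)_i − u_ex(h)_i is O(h³) as h → 0 from the right; i.e., all iterated linear-neighbour methods LN_2, LN_3, LN_4, … are at least second-order numerical methods for the linear ODE initial value problem du/dt = M u + Q, u(0) = u⁰ (Theorem 1, linear-neighbour part). -/

import Mathlib

open Finset NormedSpace Asymptotics

/-- `aCoef M Q v i = Σ_{j≠i} M_ij v_j + Q_i`. -/
noncomputable def aCoef {N : ℕ} (M : Matrix (Fin N) (Fin N) ℝ) (Q : Fin N → ℝ)
    (v : Fin N → ℝ) (i : Fin N) : ℝ :=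
  (∑ j ∈ Finset.univ.erase i, M i j * v j) + Q i

/-- The constant-neighbour step `F_h`. -/
noncomputable def cnStep {N : ℕ} (M : Matrix (Fin N) (Fin N) ℝ) (Q u0 : Fin N → ℝ)
    (h : ℝ) (v : Fin N → ℝ) : Fin N → ℝ :=
  fun i => u0 i * Real.exp (M i i * h)
    + (aCoef M Q v i / (-(M i i))) * (1 - Real.exp (M i i * h))

/-- The `k`-stage constant-neighbour approximation `CN_k(h) = F_h^[k] u⁰`. -/
noncomputable def CN {N : ℕ} (M : Matrix (Fin N) (Fin N) ℝ) (Q u0 : Fin N → ℝ)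
    (k : ℕ) (h : ℝ) : Fin N → ℝ :=
  (cnStep M Q u0 h)^[k] u0

/-- The effective slope `s_i(v) = (a_i(v) − a_i(u⁰))/h`. -/
noncomputable def sCoef {N : ℕ} (M : Matrix (Fin N) (Fin N) ℝ) (Q u0 : Fin N → ℝ)
    (h : ℝ) (v : Fin N → ℝ) (i : Fin N) : ℝ :=
  (aCoef M Q v i - aCoef M Q u0 i) / h

/-- The linear-neighbour step `G_h`, with `τ_i = −1/M_ii`. -/
noncomputable def lnStep {N : ℕ} (M : Matrix (Fin N) (Fin N) ℝ) (Q u0 : Fin N → ℝ)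
    (h : ℝ) (v : Fin N → ℝ) : Fin N → ℝ :=
  fun i =>
    u0 i * Real.exp (M i i * h)
      + (aCoef M Q u0 i * (-(M i i)⁻¹) - sCoef M Q u0 h v i * (-(M i i)⁻¹) ^ 2)
          * (1 - Real.exp (M i i * h))
      + sCoef M Q u0 h v i * (-(M i i)⁻¹) * h

/-- The `k`-stage linear-neighbour approximation `LN_k(h) = G_h^[k−1] (CN_1(h))`, `k ≥ 2`. -/
noncomputable def LN {N : ℕ} (M : Matrix (Fin N) (Fin N) ℝ) (Q u0 : Fin N → ℝ)
    (k : ℕ) (h : ℝ) : Fin N → ℝ :=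
  (lnStep M Q u0 h)^[k - 1] (cnStep M Q u0 h u0)

/-- The exact solution `u_ex(h) = e^{hM} u⁰ + ∫₀^h e^{(h−s)M} Q ds`. -/
noncomputable def uex {N : ℕ} (M : Matrix (Fin N) (Fin N) ℝ) (Q u0 : Fin N → ℝ)
    (h : ℝ) : Fin N → ℝ :=
  (exp (h • M)).mulVec u0 + ∫ s in (0:ℝ)..h, (exp ((h - s) • M)).mulVec Q

/-!
Both `LN_k(h)` and `u_ex(h)` agree up to `O(h³)` with the Taylor polynomial
`u⁰ + h u'(0) + h²/2 u''(0)`, where `u'(0) = M u⁰ + Q` and `u''(0) = M u'(0)`. For `u_ex` this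
comes from the power series of the matrix exponential, integrated once for the source term.
For `LN_k`, the step `G_h` turns any first-order accurate input `v` into a second-order accurate
output: the slope `s_i(v)` is then `Σ_{j≠i} M_ij u'_j(0) + O(h)`, which is exactly the
off-diagonal part of `u''_i(0)`, while the diagonal part is resolved exactly by the exponential.
Since `CN_1(h)` is first-order accurate, induction on `k` finishes the argument.
-/

open Filter Topology
open scoped Matrix Interval Nat

theorem NormedSpace.exp_smul_sub_sum_isBigO {𝕂 𝔸 : Type*} [RCLike 𝕂] [NormedRing 𝔸]
    [NormedAlgebra 𝕂 𝔸] [CompleteSpace 𝔸] (A : 𝔸) (n : ℕ) :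
    (fun t : 𝕂 => exp (t • A) - ∑ k ∈ range n, (t ^ k / k !) • A ^ k) =O[𝓝 0] (· ^ n) := by
  have hA : Tendsto (fun t : 𝕂 => t • A) (𝓝 0) (𝓝 0) :=
    (continuous_id.smul continuous_const).tendsto' 0 0 (zero_smul 𝕂 A)
  have hnorm : (fun t : 𝕂 => ‖t • A‖ ^ n) =O[𝓝 0] (· ^ n) :=
    IsBigO.of_bound (‖A‖ ^ n) <| .of_forall fun t => by
      simp [norm_smul, mul_pow, mul_comm]
  refine ((exp_hasFPowerSeriesAt_zero (𝕂 := 𝕂) (𝔸 := 𝔸)).isBigO_sub_partialSum_pow n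
    |>.comp_tendsto hA |>.trans hnorm).congr_left fun t => ?_
  simp [FormalMultilinearSeries.partialSum, expSeries_apply_eq, smul_pow, smul_smul,
    div_eq_inv_mul]

theorem Real.exp_mul_sub_sum_isBigO (c : ℝ) (n : ℕ) :
    (fun t : ℝ => Real.exp (c * t) - ∑ k ∈ range n, (c * t) ^ k / k !) =O[𝓝 0] (· ^ n) :=
  (NormedSpace.exp_smul_sub_sum_isBigO c n).congr_left fun t => by
    simp [Real.exp_eq_exp_ℝ, mul_comm c t, mul_pow, div_mul_eq_mul_div]

theorem intervalIntegral.integral_isBigO_pow_succ {E : Type*} [NormedAddCommGroup E]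
    [NormedSpace ℝ E] {f : ℝ → E} {n : ℕ} (hf : f =O[𝓝 0] (· ^ n)) :
    (fun h => ∫ t in 0..h, f t) =O[𝓝 0] (· ^ (n + 1)) := by
  obtain ⟨C, hC, hfC⟩ := hf.exists_nonneg
  obtain ⟨δ, hδ, hfδ⟩ := Metric.eventually_nhds_iff_ball.1 hfC.bound
  refine IsBigO.of_bound C (eventually_of_mem (Metric.ball_mem_nhds 0 hδ) fun h hh => ?_)
  have hbound : ∀ t ∈ Ι 0 h, ‖f t‖ ≤ C * |h| ^ n := fun t ht => by
    have hth : |t| ≤ |h| := by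
      simpa using Set.abs_sub_left_of_mem_uIcc (Set.uIoc_subset_uIcc ht)
    have htδ : t ∈ Metric.ball 0 δ := by
      rw [mem_ball_zero_iff] at hh ⊢
      exact hth.trans_lt hh
    calc ‖f t‖ ≤ C * |t| ^ n := by simpa using hfδ t htδ
      _ ≤ C * |h| ^ n := by gcongr
  simpa [norm_pow, pow_succ, mul_assoc] using norm_integral_le_of_norm_le_const hbound

theorem Asymptotics.IsBigO.div_id {𝕜 : Type*} [NormedField 𝕜] {f : 𝕜 → 𝕜} {n : ℕ}
    (hf : f =O[𝓝[≠] 0] (· ^ (n + 1))) : (fun x => f x / x) =O[𝓝[≠] 0] (· ^ n) := by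
  refine (hf.mul (isBigO_refl (·⁻¹) _)).congr' (.of_forall fun x => (div_eq_mul_inv _ _).symm) ?_
  filter_upwards [self_mem_nhdsWithin] with x hx
  rw [pow_succ, mul_inv_cancel_right₀ hx]

section MatrixExp

attribute [local instance] Matrix.linftyOpNormedRing Matrix.linftyOpNormedAlgebra

variable {m 𝕂 : Type*} [Fintype m] [DecidableEq m] [RCLike 𝕂] (A : Matrix m m 𝕂) (v : m → 𝕂)

theorem Matrix.exp_smul_mulVec_sub_sum_isBigO (n : ℕ) :
    (fun t : 𝕂 => exp (t • A) *ᵥ v - ∑ k ∈ range n, (t ^ k / k !) • (A ^ k *ᵥ v))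
      =O[𝓝 0] (· ^ n) := by
  refine IsBigO.trans ?_ (NormedSpace.exp_smul_sub_sum_isBigO A n)
  refine IsBigO.of_bound ‖v‖ (.of_forall fun t => ?_)
  have hmul : exp (t • A) *ᵥ v - ∑ k ∈ range n, (t ^ k / k !) • (A ^ k *ᵥ v)
      = (exp (t • A) - ∑ k ∈ range n, (t ^ k / k !) • A ^ k) *ᵥ v := by
    simp [Matrix.sub_mulVec, Matrix.sum_mulVec, Matrix.smul_mulVec]
  rw [hmul]
  exact (Matrix.linfty_opNorm_mulVec _ _).trans_eq (mul_comm _ _)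

theorem Matrix.continuous_exp_smul_mulVec : Continuous fun t : 𝕂 => exp (t • A) *ᵥ v :=
  (continuous_iff_continuousAt.2 fun t =>
    (hasDerivAt_exp_smul_const A t).continuousAt).matrix_mulVec continuous_const

end MatrixExp

section LinearSystem

variable {N : ℕ} (M : Matrix (Fin N) (Fin N) ℝ) (Q u0 : Fin N → ℝ)

/-- Taylor polynomials at `0` of the solution of `u' = M u + Q`, `u(0) = u0`: `u'(0) = M u0 + Q`
and `u''(0) = M u'(0)`. -/
noncomputable def odeTaylor1 (h : ℝ) : Fin N → ℝ := u0 + h • (M *ᵥ u0 + Q)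

noncomputable def odeTaylor2 (h : ℝ) : Fin N → ℝ :=
  odeTaylor1 M Q u0 h + (h ^ 2 / 2) • (M *ᵥ (M *ᵥ u0 + Q))

theorem odeTaylor1_apply (h : ℝ) (i : Fin N) :
    odeTaylor1 M Q u0 h i = u0 i + h * (M *ᵥ u0 + Q) i := rfl

theorem odeTaylor2_apply (h : ℝ) (i : Fin N) :
    odeTaylor2 M Q u0 h i
      = u0 i + h * (M *ᵥ u0 + Q) i + h ^ 2 / 2 * (M *ᵥ (M *ᵥ u0 + Q)) i := rfl

theorem odeTaylor2_sub_odeTaylor1_isBigO :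
    (fun h => odeTaylor2 M Q u0 h - odeTaylor1 M Q u0 h) =O[𝓝 0] (· ^ 2) :=
  IsBigO.of_bound (‖M *ᵥ (M *ᵥ u0 + Q)‖ / 2) <| .of_forall fun h => by
    simp [odeTaylor2, norm_smul]
    exact le_of_eq (by ring)

theorem integral_exp_smul_mulVec_sub_isBigO :
    (fun h => (∫ t in 0..h, exp (t • M) *ᵥ Q) - (h • Q + (h ^ 2 / 2) • (M *ᵥ Q)))
      =O[𝓝 0] (· ^ 3) := by
  refine (intervalIntegral.integral_isBigO_pow_succ
    (Matrix.exp_smul_mulVec_sub_sum_isBigO M Q 2)).congr_left fun h => ?_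
  rw [intervalIntegral.integral_sub
    ((Matrix.continuous_exp_smul_mulVec M Q).intervalIntegrable _ _)
    (Continuous.intervalIntegrable (by fun_prop) _ _),
    intervalIntegral.integral_finsetSum fun k _ => Continuous.intervalIntegrable (by fun_prop) _ _]
  simp [intervalIntegral.integral_smul_const, intervalIntegral.integral_div, Finset.sum_range_succ,
    one_add_one_eq_two]

theorem uex_sub_odeTaylor2_isBigO :
    (fun h => uex M Q u0 h - odeTaylor2 M Q u0 h) =O[𝓝 0] (· ^ 3) := by
  refine ((Matrix.exp_smul_mulVec_sub_sum_isBigO M u0 3).add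
    (integral_exp_smul_mulVec_sub_isBigO M Q)).congr_left fun h => ?_
  have hflip : ∫ s in 0..h, exp ((h - s) • M) *ᵥ Q = ∫ t in 0..h, exp (t • M) *ᵥ Q := by
    simpa using intervalIntegral.integral_comp_sub_left (fun t => exp (t • M) *ᵥ Q) h
      (a := 0) (b := h)
  rw [uex, hflip, odeTaylor2, odeTaylor1]
  simp [Finset.sum_range_succ, Matrix.mulVec_add, Matrix.mulVec_mulVec, sq]
  abel

theorem mulVec_add_apply_eq_diag_add_aCoef (v : Fin N → ℝ) (i : Fin N) :
    (M *ᵥ v + Q) i = M i i * v i + aCoef M Q v i := by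
  rw [Pi.add_apply, Matrix.mulVec, dotProduct, aCoef,
    ← Finset.add_sum_erase _ _ (Finset.mem_univ i), add_assoc]

theorem aCoef_sub_aCoef (v w : Fin N → ℝ) (i : Fin N) :
    aCoef M Q v i - aCoef M Q w i = aCoef M 0 (v - w) i := by
  simp [aCoef, mul_sub, Finset.sum_sub_distrib]

theorem aCoef_zero_isBigO {α : Type*} {l : Filter α} (f : α → Fin N → ℝ) (i : Fin N) :
    (fun x => aCoef M 0 (f x) i) =O[l] f := by
  simp only [aCoef, Pi.zero_apply, add_zero]
  exact IsBigO.fun_sum fun j _ => (isBigO_pi.1 (isBigO_refl f l) j).const_mul_left _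

theorem sCoef_sub_aCoef_isBigO {v : ℝ → Fin N → ℝ}
    (hv : (fun h => v h - odeTaylor1 M Q u0 h) =O[𝓝[≠] 0] (· ^ 2)) (i : Fin N) :
    (fun h => sCoef M Q u0 h (v h) i - aCoef M 0 (M *ᵥ u0 + Q) i) =O[𝓝[≠] 0] (· ^ 1) := by
  refine ((aCoef_zero_isBigO M _ i).trans hv).div_id.congr' ?_ (.of_forall fun _ => rfl)
  filter_upwards [self_mem_nhdsWithin] with h hh
  rw [sCoef, aCoef_sub_aCoef, eq_sub_iff_add_eq, div_add' _ _ _ hh, odeTaylor1]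
  congr 1
  simp only [aCoef, Pi.sub_apply, Pi.add_apply, Pi.smul_apply, smul_eq_mul, Pi.zero_apply,
    add_zero, Finset.sum_mul, ← Finset.sum_add_distrib]
  exact Finset.sum_congr rfl fun j _ => by ring

/-- With `c = M i i`: `F_h(u⁰)_i - (u⁰_i + h u'_i(0)) = (u'_i(0) / c) (e^{ch} - 1 - ch)`. -/
theorem cnStep_sub_odeTaylor1_isBigO (hM : ∀ i, M i i ≠ 0) :
    (fun h => cnStep M Q u0 h u0 - odeTaylor1 M Q u0 h) =O[𝓝 0] (· ^ 2) := by
  refine isBigO_pi.2 fun i => ?_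
  refine ((Real.exp_mul_sub_sum_isBigO (M i i) 2).const_mul_left
    ((M *ᵥ u0 + Q) i / M i i)).congr_left fun h => ?_
  have hc := hM i
  simp only [Finset.sum_range_succ, Finset.sum_range_zero, cnStep, Pi.sub_apply, odeTaylor1_apply,
    mulVec_add_apply_eq_diag_add_aCoef]
  field_simp
  ring

/-- With `c = M i i`, `w = u'(0)`, `r = Σ_{j≠i} M_ij w_j` and `s = s_i(v)`, the error is
`(w_i/c + r/c²) (e^{ch} - T₃(ch)) + (s - r) (e^{ch} - T₂(ch)) / c²`, `Tₙ` being the Taylor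
polynomial of `exp` of degree `< n`. -/
theorem lnStep_sub_odeTaylor2_isBigO (hM : ∀ i, M i i ≠ 0) {v : ℝ → Fin N → ℝ}
    (hv : (fun h => v h - odeTaylor1 M Q u0 h) =O[𝓝[≠] 0] (· ^ 2)) :
    (fun h => lnStep M Q u0 h (v h) - odeTaylor2 M Q u0 h) =O[𝓝[≠] 0] (· ^ 3) := by
  refine isBigO_pi.2 fun i => ?_
  have hc := hM i
  have hE2 := (Real.exp_mul_sub_sum_isBigO (M i i) 2).mono (nhdsWithin_le_nhds (s := {0}ᶜ))
  have hE3 := (Real.exp_mul_sub_sum_isBigO (M i i) 3).mono (nhdsWithin_le_nhds (s := {0}ᶜ))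
  have hs := sCoef_sub_aCoef_isBigO M Q u0 hv i
  have hMw : (M *ᵥ (M *ᵥ u0 + Q)) i
      = M i i * (M *ᵥ u0 + Q) i + aCoef M 0 (M *ᵥ u0 + Q) i := by
    simpa using mulVec_add_apply_eq_diag_add_aCoef M 0 (M *ᵥ u0 + Q) i
  refine ((hE3.const_mul_left
      ((M *ᵥ u0 + Q) i / M i i + aCoef M 0 (M *ᵥ u0 + Q) i / M i i ^ 2)).add
    (((hs.mul hE2).const_mul_left (M i i ^ 2)⁻¹).congr_right fun h => by ring)).congr_left
    fun h => ?_
  simp only [Finset.sum_range_succ, Finset.sum_range_zero, Nat.factorial_zero, Nat.factorial_one,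
    Nat.factorial_two, Nat.cast_one, Nat.cast_ofNat, lnStep, Pi.sub_apply, odeTaylor2_apply, hMw,
    mulVec_add_apply_eq_diag_add_aCoef]
  field_simp
  ring

theorem lnStep_iterate_sub_odeTaylor2_isBigO (hM : ∀ i, M i i ≠ 0) (n : ℕ) :
    (fun h => (lnStep M Q u0 h)^[n + 1] (cnStep M Q u0 h u0) - odeTaylor2 M Q u0 h)
      =O[𝓝[≠] 0] (· ^ 3) := by
  induction n with
  | zero =>
    exact lnStep_sub_odeTaylor2_isBigO M Q u0 hM
      ((cnStep_sub_odeTaylor1_isBigO M Q u0 hM).mono nhdsWithin_le_nhds)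
  | succ n ih =>
    simp only [Function.iterate_succ_apply' (lnStep M Q u0 _) (n + 1)]
    refine lnStep_sub_odeTaylor2_isBigO M Q u0 hM ?_
    have hcubic : (fun h : ℝ => h ^ 3) =O[𝓝[≠] 0] (· ^ 2) :=
      (isLittleO_pow_pow (by norm_num)).isBigO.mono nhdsWithin_le_nhds
    exact ((ih.trans hcubic).add ((odeTaylor2_sub_odeTaylor1_isBigO M Q u0).mono
      nhdsWithin_le_nhds)).congr_left fun h => by abel

end LinearSystem

theorem ln_iterates_second_order_general {N : ℕ} (M : Matrix (Fin N) (Fin N) ℝ)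
    (hM : ∀ i, M i i < 0) (Q u0 : Fin N → ℝ) (k : ℕ) (hk : 2 ≤ k) (i : Fin N) :
    (fun h : ℝ => LN M Q u0 k h i - uex M Q u0 h i)
      =O[nhdsWithin 0 (Set.Ioi 0)] fun h : ℝ => h ^ 3 := by
  obtain ⟨n, rfl⟩ : ∃ n, k = n + 2 := ⟨k - 2, by omega⟩
  have hLN := (lnStep_iterate_sub_odeTaylor2_isBigO M Q u0 (fun j => (hM j).ne) n).mono
    (nhdsGT_le_nhdsNE 0)
  have hex := (uex_sub_odeTaylor2_isBigO M Q u0).mono (nhdsWithin_le_nhds (s := Set.Ioi 0))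
  have hdiff : (fun h => LN M Q u0 (n + 2) h - uex M Q u0 h) =O[𝓝[>] 0] (· ^ 3) :=
    (hLN.sub hex).congr_left fun h => sub_sub_sub_cancel_right _ _ _
  exact isBigO_pi.1 hdiff i

/-- Theorem 1 (linear-neighbour part): for every `k ≥ 2`, the `k`-stage
linear-neighbour method has local truncation error `O(h³)` as `h → 0⁺`,
i.e. all methods `LN_2, LN_3, …` are at least second order. -/
theorem ln_iterates_second_order {N : ℕ} (hN : 1 ≤ N) (M : Matrix (Fin N) (Fin N) ℝ)
    (hM : ∀ i, M i i < 0) (Q u0 : Fin N → ℝ) (k : ℕ) (hk : 2 ≤ k) (i : Fin N) :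
    (fun h : ℝ => LN M Q u0 k h i - uex M Q u0 h i)
      =O[nhdsWithin 0 (Set.Ioi 0)] fun h : ℝ => h ^ 3 :=
  ln_iterates_second_order_general M hM Q u0 k hk i
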